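/- Let f ∈ K[x_1,…,x_N] be a polynomial over a valued field K with valuation val, and let x(t) ∈ (K*)^N satisfy f(x(t)) = 0. Write x_i(t) = c_i t^{v_i}(1 + h_i) with c_i ∈ ℂ*, v_i = val(x_i), and val(h_i) > 0. Then the initial form in_v(f) (the sum of the terms of f achieving the minimum of val(c_α) + α·v over all monomials x^α of f, with coefficients replaced by their leading coefficients) vanishes at the leading coefficient vector c = (c_1,…,c_N). -/

import Mathlib

/-! The term `c_α x^α` has order `wt α` and leading coefficient `lc(c_α) ∏ lc(x_i)^{α_i}`,
because over a domain the order is additive on nonzero series and the leading coefficient is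
multiplicative. In the vanishing sum `f(x(t))` the coefficient of `t^m`, for `m` the minimal order,
receives contributions only from the terms of order exactly `m`, namely their leading
coefficients; so these add up to zero. -/

open Finset

namespace HahnSeries

theorem sum_leadingCoeff_of_order_eq_inf'_eq_zero {Γ R ι : Type*} [LinearOrder Γ] [Zero Γ]
    [AddCommMonoid R] {s : Finset ι} (hs : s.Nonempty) {f : ι → HahnSeries Γ R}
    (h : ∑ i ∈ s, f i = 0) :
    ∑ i ∈ s with (f i).order = s.inf' hs (fun i => (f i).order), (f i).leadingCoeff = 0 := by
  set m := s.inf' hs (fun i => (f i).order)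
  have hcoeff : ∑ i ∈ s, (f i).coeff m = 0 := by rw [← coeff_sum, h, coeff_zero]
  have hhigher : ∑ i ∈ s with (f i).order ≠ m, (f i).coeff m = 0 :=
    sum_eq_zero fun i hi => by
      rw [mem_filter] at hi
      exact coeff_eq_zero_of_lt_order ((inf'_le _ hi.1).lt_of_ne' hi.2)
  rw [← sum_filter_add_sum_filter_not s (fun i => (f i).order = m), hhigher, add_zero] at hcoeff
  rw [← hcoeff]
  exact sum_congr rfl fun i hi => by rw [leadingCoeff_eq, (mem_filter.1 hi).2]

section Domain

variable {Γ R : Type*} [AddCommMonoid Γ] [LinearOrder Γ] [IsOrderedCancelAddMonoid Γ]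
  [CommSemiring R] [NoZeroDivisors R]

noncomputable def leadingCoeffHom : HahnSeries Γ R →* R where
  toFun := leadingCoeff
  map_one' := leadingCoeff_one
  map_mul' x y := leadingCoeff_mul x y

theorem leadingCoeff_mul_prod_pow {σ : Type*} [Fintype σ] (a : HahnSeries Γ R)
    (x : σ → HahnSeries Γ R) (α : σ → ℕ) :
    (a * ∏ i, x i ^ α i).leadingCoeff = a.leadingCoeff * ∏ i, (x i).leadingCoeff ^ α i := by
  change leadingCoeffHom _ = leadingCoeffHom a * ∏ i, leadingCoeffHom (x i) ^ α i
  simp only [map_mul, map_prod, map_pow]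

variable [Nontrivial R]

theorem order_prod {ι : Type*} (s : Finset ι) {f : ι → HahnSeries Γ R}
    (hf : ∀ i ∈ s, f i ≠ 0) : (∏ i ∈ s, f i).order = ∑ i ∈ s, (f i).order := by
  induction s using Finset.cons_induction with
  | empty => simp
  | cons a s ha ih =>
    rw [forall_mem_cons] at hf
    rw [prod_cons, sum_cons, order_mul hf.1 (prod_ne_zero_iff.2 hf.2), ih hf.2]

theorem order_mul_prod_pow {σ : Type*} [Fintype σ] {a : HahnSeries Γ R} (ha : a ≠ 0)
    {x : σ → HahnSeries Γ R} (hx : ∀ i, x i ≠ 0) (α : σ → ℕ) :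
    (a * ∏ i, x i ^ α i).order = a.order + ∑ i, α i • (x i).order := by
  rw [order_mul ha (prod_ne_zero_iff.2 fun i _ => pow_ne_zero _ (hx i)),
    order_prod _ fun i _ => pow_ne_zero _ (hx i)]
  simp only [order_pow]

end Domain

end HahnSeries

open HahnSeries

/-- if `x(t) ∈ (K*)^N` is a zero of a polynomial
`f = ∑_{α ∈ S} c_α x^α` over the valued series field `K`, then the initial form
`in_v(f)` (the sum of the terms attaining `min_α (val c_α + α·v)`, with
coefficients replaced by their leading coefficients) vanishes at the leading
coefficient vector of `x(t)`.  Here `K` is the Laurent/Puiseux-type series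
field, `val` is the order and the leading coefficient of a nonzero series `a`
is `a.coeff a.order`. -/
theorem initial_form_vanishes_at_leading_coefficients
    {N : ℕ} (S : Finset ((Fin N) → ℕ)) (hS : S.Nonempty)
    (c : ((Fin N) → ℕ) → LaurentSeries ℂ) (hc : ∀ α ∈ S, c α ≠ 0)
    (x : Fin N → LaurentSeries ℂ) (hx : ∀ i, x i ≠ 0)
    (hzero : ∑ α ∈ S, c α * ∏ i, x i ^ α i = 0) :
    let v : Fin N → ℤ := fun i => (x i).order
    let wt : ((Fin N) → ℕ) → ℤ := fun α => (c α).order + ∑ i, (α i : ℤ) * v i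
    let m := S.inf' hS wt
    ∑ α ∈ S.filter (fun α => wt α = m),
        (c α).coeff (c α).order * ∏ i, ((x i).coeff (x i).order) ^ α i = 0 := by
  intro v wt m
  set term := fun α : Fin N → ℕ => c α * ∏ i, x i ^ α i
  have horder : ∀ α ∈ S, (term α).order = wt α := fun α hα => by
    simp only [term, order_mul_prod_pow (hc α hα) hx, wt, v, nsmul_eq_mul]
  have hinf : S.inf' hS (fun α => (term α).order) = m := inf'_congr hS rfl horder
  calc _ = ∑ α ∈ S with (term α).order = S.inf' hS (fun α => (term α).order),
          (term α).leadingCoeff := by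
        rw [hinf]
        refine sum_congr (filter_congr fun α hα => by rw [horder α hα]) fun α _ => ?_
        rw [leadingCoeff_mul_prod_pow]
        simp only [leadingCoeff_eq]
    _ = 0 := sum_leadingCoeff_of_order_eq_inf'_eq_zero hS hzero
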